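/- Let φ : ℝ → ℝ be defined by φ(w) = max(0, 2w) − max(0, 4w − 2), and let φ^j denote its j-fold composition. For every integer j ≥ 1 and every z ∈ [0,1) such that 2^j·z is not an integer: ⌊2^j·z⌋ is odd if and only if φ^j(z − 2^{−j−1}) ≥ 1/2. (That is, the sawtooth function φ^j, shifted by 2^{−j−1} and thresholded at 1/2, extracts the j-th binary digit of z.) -/

import Mathlib

/-!
On `[0, 1]` the map `φ` is the tent `x ↦ min (2x) (2 − 2x)`, and composing it with the
1-periodic triangle wave `T y = min (2 fract y) (2 − 2 fract y)` doubles the frequency: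
`φ (T y) = T (2y)`. Hence `φ^[k+1] x = T (2^k x)` for `x ∈ [0, 1]`. With `y = 2^(k+1) z` the
shifted argument `x = z − 2^(−k−2)` gives `2^k x = y/2 − 1/4`, and `T (y/2 − 1/4) ≥ 1/2` exactly
when `fract (y/2) ≥ 1/2` (away from `y/2 ∈ ℤ`), which is the parity of `⌊y⌋`.
If instead `x < 0`, then `φ^[k+1] x = 0` and `⌊y⌋ = 0`.
-/

noncomputable section

/-- Telgarsky's tent map `φ(w) = max(0, 2w) − max(0, 4w − 2)`. -/
def phi (w : ℝ) : ℝ := max 0 (2 * w) - max 0 (4 * w - 2)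

def triangleWave (y : ℝ) : ℝ := min (2 * Int.fract y) (2 - 2 * Int.fract y)

lemma phi_eq_min {x : ℝ} (h0 : 0 ≤ x) : phi x = min (2 * x) (2 - 2 * x) := by
  unfold phi
  rcases le_total x (1 / 2) with h | h
  · rw [max_eq_right (by linarith), max_eq_left (by linarith), min_eq_left (by linarith)]
    ring
  · rw [max_eq_right (by linarith), max_eq_right (by linarith), min_eq_right (by linarith)]
    ring

lemma phi_of_nonpos {x : ℝ} (h : x ≤ 0) : phi x = 0 := by
  unfold phi
  rw [max_eq_left (by linarith), max_eq_left (by linarith)]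
  ring

lemma iterate_phi_succ_of_nonpos {x : ℝ} (h : x ≤ 0) (n : ℕ) : phi^[n + 1] x = 0 := by
  rw [Function.iterate_succ_apply, phi_of_nonpos h,
    Function.iterate_fixed (phi_of_nonpos le_rfl)]

lemma phi_eq_triangleWave {x : ℝ} (h0 : 0 ≤ x) (h1 : x ≤ 1) : phi x = triangleWave x := by
  rcases h1.lt_or_eq with h1 | rfl
  · rw [phi_eq_min h0, triangleWave, Int.fract_eq_self.2 ⟨h0, h1⟩]
  · norm_num [phi_eq_min, triangleWave]

lemma phi_triangleWave (y : ℝ) : phi (triangleWave y) = triangleWave (2 * y) := by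
  have hf0 := Int.fract_nonneg y
  have hf1 := Int.fract_lt_one y
  have h2y : 2 * y = 2 * Int.fract y + (2 * ⌊y⌋ : ℤ) := by
    push_cast; linarith [Int.floor_add_fract y]
  rw [triangleWave, triangleWave, h2y, Int.fract_add_intCast]
  rcases lt_or_ge (Int.fract y) (1 / 2) with h | h
  · have hfract : Int.fract (2 * Int.fract y) = 2 * Int.fract y :=
      Int.fract_eq_self.2 ⟨by linarith, by linarith⟩
    rw [min_eq_left (by linarith), phi_eq_min (by linarith), hfract]
  · have hfract : Int.fract (2 * Int.fract y) = 2 * Int.fract y - 1 :=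
      Int.fract_eq_iff.2 ⟨by linarith, by linarith, 1, by push_cast; ring⟩
    rw [min_eq_right (by linarith), phi_eq_min (by linarith), hfract, min_comm]
    ring_nf

lemma iterate_phi_succ_eq_triangleWave {x : ℝ} (h0 : 0 ≤ x) (h1 : x ≤ 1) (n : ℕ) :
    phi^[n + 1] x = triangleWave (2 ^ n * x) := by
  induction n with
  | zero => rw [Function.iterate_one, pow_zero, one_mul, phi_eq_triangleWave h0 h1]
  | succ n ih => rw [Function.iterate_succ_apply', ih, phi_triangleWave, pow_succ, mul_comm _ 2,
      mul_assoc]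

lemma odd_floor_iff_half_le_fract_half (y : ℝ) : Odd ⌊y⌋ ↔ 1 / 2 ≤ Int.fract (y / 2) := by
  set f := Int.fract (y / 2)
  have hf0 : 0 ≤ f := Int.fract_nonneg _
  have hf1 : f < 1 := Int.fract_lt_one _
  have hy : y = 2 * f + (2 * ⌊y / 2⌋ : ℤ) := by
    push_cast; linarith [Int.floor_add_fract (y / 2)]
  rw [hy, Int.floor_add_intCast]
  rcases lt_or_ge f (1 / 2) with h | h
  · rw [Int.floor_eq_zero_iff.2 ⟨by linarith, by linarith⟩]
    exact iff_of_false (by simp [parity_simps]) (by linarith)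
  · have hfloor : ⌊2 * f⌋ = 1 :=
      Int.floor_eq_iff.2 ⟨by push_cast; linarith, by push_cast; linarith⟩
    rw [hfloor]
    exact iff_of_true ⟨⌊y / 2⌋, by ring⟩ h

lemma half_le_triangleWave_sub_quarter_iff {w : ℝ} (hw : Int.fract w ≠ 0) :
    1 / 2 ≤ triangleWave (w - 1 / 4) ↔ 1 / 2 ≤ Int.fract w := by
  have hf0 : 0 < Int.fract w := (Int.fract_nonneg w).lt_of_ne' hw
  have hf1 := Int.fract_lt_one w
  have hw' := Int.floor_add_fract w
  rcases lt_or_ge (Int.fract w) (1 / 4) with h | h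
  · have hfract : Int.fract (w - 1 / 4) = Int.fract w + 3 / 4 :=
      Int.fract_eq_iff.2 ⟨by linarith, by linarith, ⌊w⌋ - 1, by push_cast; linarith⟩
    rw [triangleWave, hfract, le_min_iff]
    exact iff_of_false (fun h' => by linarith [h'.2]) (by linarith)
  · have hfract : Int.fract (w - 1 / 4) = Int.fract w - 1 / 4 :=
      Int.fract_eq_iff.2 ⟨by linarith, by linarith, ⌊w⌋, by linarith⟩
    rw [triangleWave, hfract, le_min_iff]
    constructor
    · rintro ⟨h', -⟩
      linarith
    · intro h'
      constructor <;> linarith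

/-- for every integer `j ≥ 1` and every `z ∈ [0,1)` such that `2^j·z` is
not an integer, `⌊2^j·z⌋` is odd if and only if `φ^j(z − 2^{−j−1}) ≥ 1/2`, where `φ^j`
is the `j`-fold composition of `φ`. -/
theorem sawtooth_extracts_binary_digit (j : ℕ) (hj : 1 ≤ j) (z : ℝ)
    (hz0 : 0 ≤ z) (hz1 : z < 1)
    (hnotint : ∀ m : ℤ, (m : ℝ) ≠ 2 ^ j * z) :
    Odd ⌊(2:ℝ) ^ j * z⌋ ↔ 1/2 ≤ phi^[j] (z - 1 / 2 ^ (j + 1)) := by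
  obtain ⟨k, rfl⟩ : ∃ k, j = k + 1 := ⟨j - 1, by omega⟩
  set y : ℝ := 2 ^ (k + 1) * z with hy
  have hshift : 2 ^ k * (z - 1 / 2 ^ (k + 1 + 1)) = y / 2 - 1 / 4 := by
    rw [hy]; field_simp; ring
  have hy_half_ne : Int.fract (y / 2) ≠ 0 := fun h => by
    obtain ⟨m, hm⟩ := Int.fract_eq_zero_iff.1 h
    exact hnotint (2 * m) (by push_cast; linarith)
  rcases lt_or_ge (z - 1 / 2 ^ (k + 1 + 1)) 0 with hneg | hnonneg
  · have hy_small : y / 2 - 1 / 4 < 0 := hshift ▸ mul_neg_of_pos_of_neg (pow_pos two_pos k) hneg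
    rw [Int.floor_eq_zero_iff.2 ⟨by positivity, by linarith⟩,
      iterate_phi_succ_of_nonpos hneg.le]
    norm_num
  · have hle : z - 1 / 2 ^ (k + 1 + 1) ≤ 1 := by
      have : (0 : ℝ) < 1 / 2 ^ (k + 1 + 1) := by positivity
      linarith
    rw [iterate_phi_succ_eq_triangleWave hnonneg hle, hshift,
      half_le_triangleWave_sub_quarter_iff hy_half_ne, odd_floor_iff_half_le_fract_half]

end
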